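/- The map G_1(z) = (z, 1 - sqrt(1 - z^2)) from the unit disc Δ ⊂ C to C^2 satisfies |z|^2 + |g(z)|^2 - (1/4)|z^2 + g(z)^2|^2 = |z|^2 where g(z) = 1 - sqrt(1-z^2), hence G_1 maps Δ into D^{IV}_2 and is a proper holomorphic map (the defining function 1 - |z|^2 - |g|^2 + (1/4)|z^2+g^2|^2 = 1 - |z|^2 tends to 0 as |z| → 1). -/

import Mathlib

/-!
Since `√(1 - z²)² = 1 - z²`, the function `g = 1 - √(1 - z²)` satisfies `z² + g² = 2g`, so
`(1/4)|z² + g²|² = |g|²` and the defining expression collapses to `|z|²`. For `|z| < 1` the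
square root has positive real part, so `|1 + √(1 - z²)| > 1`, and `g (1 + √(1 - z²)) = z²`
gives `|g| ≤ |z|² < 1`.
-/

/-- The branch `g(z) = 1 - √(1 - z²)` of the square root on the unit disc. -/
noncomputable def g12 (z : ℂ) : ℂ := 1 - (1 - z ^ 2) ^ ((1 : ℂ) / 2)

open Complex

lemma Complex.cpow_one_half_sq (w : ℂ) : (w ^ (1 / 2 : ℂ)) ^ 2 = w := by
  rw [one_div, ← Nat.cast_ofNat, cpow_nat_inv_pow w two_ne_zero]

lemma Complex.re_cpow_one_half_pos {w : ℂ} (hw : 0 < w.re) : 0 < (w ^ (1 / 2 : ℂ)).re := by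
  rw [one_div, cpow_inv_two_re]
  exact Real.sqrt_pos.2 (by linarith [re_le_norm w])

lemma re_one_sub_sq_pos {z : ℂ} (hz : ‖z‖ < 1) : 0 < (1 - z ^ 2).re := by
  have h : ‖z ^ 2‖ < 1 := by
    rw [norm_pow]
    nlinarith [norm_nonneg z]
  rw [sub_re, one_re]
  linarith [re_le_norm (z ^ 2)]

lemma sq_add_g12_sq (z : ℂ) : z ^ 2 + g12 z ^ 2 = 2 * g12 z := by
  unfold g12
  linear_combination cpow_one_half_sq (1 - z ^ 2)

lemma g12_mul_one_add_sqrt (z : ℂ) : g12 z * (1 + (1 - z ^ 2) ^ (1 / 2 : ℂ)) = z ^ 2 := by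
  unfold g12
  linear_combination -cpow_one_half_sq (1 - z ^ 2)

lemma norm_g12_le {z : ℂ} (hz : ‖z‖ < 1) : ‖g12 z‖ ≤ ‖z‖ ^ 2 := by
  set w : ℂ := (1 - z ^ 2) ^ (1 / 2 : ℂ)
  have hw : 1 < ‖1 + w‖ := by
    have := re_le_norm (1 + w)
    rw [add_re, one_re] at this
    linarith [re_cpow_one_half_pos (re_one_sub_sq_pos hz)]
  have h := congrArg (‖·‖) (g12_mul_one_add_sqrt z)
  simp only [norm_mul, norm_pow] at h
  nlinarith [norm_nonneg (g12 z)]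

lemma differentiableOn_g12 : DifferentiableOn ℂ g12 (Metric.ball 0 1) := by
  intro z hz
  rw [Metric.mem_ball, dist_zero_right] at hz
  refine (DifferentiableAt.const_sub ?_ 1).differentiableWithinAt
  exact ((differentiableAt_const 1).sub (differentiableAt_pow 2)).cpow
    (differentiableAt_const _) (Or.inl (re_one_sub_sq_pos hz))

lemma norm_sq_add_norm_g12_sq_sub (z : ℂ) :
    ‖z‖ ^ 2 + ‖g12 z‖ ^ 2 - (1 / 4) * ‖z ^ 2 + g12 z ^ 2‖ ^ 2 = ‖z‖ ^ 2 := by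
  rw [sq_add_g12_sq, norm_mul, Complex.norm_two]
  ring

/-- The map `G₁(z) = (z, 1 - √(1-z²))` is holomorphic on the unit disc, satisfies
`|z|² + |g|² - (1/4)|z² + g²|² = |z|²`, and maps the disc into `D^{IV}₂`. -/
theorem stmt12 :
    DifferentiableOn ℂ g12 (Metric.ball (0 : ℂ) 1) ∧
    ∀ z ∈ Metric.ball (0 : ℂ) 1,
      (‖z‖ ^ 2 + ‖g12 z‖ ^ 2
          - (1 / 4) * ‖z ^ 2 + (g12 z) ^ 2‖ ^ 2
        = ‖z‖ ^ 2) ∧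
      ‖z‖ ^ 2 + ‖g12 z‖ ^ 2 < 2 ∧
      0 < 1 - ‖z‖ ^ 2 - ‖g12 z‖ ^ 2
          + (1 / 4) * ‖z ^ 2 + (g12 z) ^ 2‖ ^ 2 := by
  refine ⟨differentiableOn_g12, fun z hz => ?_⟩
  rw [Metric.mem_ball, dist_zero_right] at hz
  have hid := norm_sq_add_norm_g12_sq_sub z
  have hg : ‖g12 z‖ ≤ ‖z‖ ^ 2 := norm_g12_le hz
  have hz2 : ‖z‖ ^ 2 < 1 := by nlinarith [norm_nonneg z]
  refine ⟨hid, ?_, by linarith⟩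
  nlinarith [norm_nonneg (g12 z)]
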